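/- If G is a threshold graph, then D(G) equals the size of the largest component in its compact canonical decomposition; equivalently, D(G) equals the maximum over maximal runs of consecutive same-type trivial components in its Tyshkevich canonical decomposition of the run length. In particular, for a threshold graph built by iteratively adding isolated or dominating vertices, D(G) equals the length of the longest run of consecutive additions of the same type (counting the first two vertices appropriately). -/

import Mathlib

/-- A `c`-labeling `φ` of the vertices of `G` is distinguishing if the only automorphism of `G`
preserving all labels is the identity. -/
def IsDistinguishing {V : Type*} (G : SimpleGraph V) {c : ℕ} (φ : V → Fin c) : Prop :=
  ∀ π : G ≃g G, (∀ v, φ (π v) = φ v) → ∀ v, π v = v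

/-- The distinguishing number of a graph. -/
noncomputable def distNum {V : Type*} (G : SimpleGraph V) : ℕ :=
  sInf {c : ℕ | ∃ φ : V → Fin c, IsDistinguishing G φ}

/-- The threshold graph built from a starting vertex by successively adding, for each entry of
`l`, a dominating vertex (`true`) or an isolated vertex (`false`).  Vertex `k ≥ 1` corresponds
to `l[k-1]`; two distinct vertices are adjacent iff the later one was added as dominating. -/
def thresholdGraph (l : List Bool) : SimpleGraph (Fin (l.length + 1)) where
  Adj i j := i ≠ j ∧ l.getD (max (i : ℕ) (j : ℕ) - 1) false = true
  symm := ⟨by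
    rintro i j ⟨h1, h2⟩
    exact ⟨h1.symm, by rwa [Nat.max_comm]⟩⟩
  loopless := ⟨by rintro i ⟨h, -⟩; exact h rfl⟩

/-- Auxiliary longest-run computation: `prev` is the type of the current run, `cur` its length
so far, `best` the longest completed run. -/
def maxRunAux : List Bool → Bool → ℕ → ℕ → ℕ
  | [], _, cur, best => max cur best
  | b :: rest, prev, cur, best =>
    if b = prev then maxRunAux rest prev (cur + 1) best
    else maxRunAux rest b 1 (max cur best)

/-- The length of the longest run of consecutive same-type additions in the construction of a
threshold graph, where the initial vertex is counted as part of the first run (so the first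
run starts with length 2). -/
def maxRun : List Bool → ℕ
  | [] => 1
  | b :: rest => maxRunAux rest b 2 0

/-!
Vertices `u < v` of a threshold graph are twins (`N(u) \ {v} = N(v) \ {u}`) exactly when all
vertices from `u` to `v` were added with the same type, so the twin classes are the runs of the
construction. Swapping two twins is an automorphism, hence a distinguishing labeling is injective
on each run and needs at least `maxRun l` colours. Conversely, the vicinal preorder
`N(u) ⊆ N[v]` of a threshold graph is total, so vertices of equal degree are twins and every
automorphism maps each vertex into its own run; labeling vertex `k` by `k % maxRun l`, which is
injective on every run, is therefore distinguishing.
-/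

namespace List

variable {α : Type*}

def HasRun (s : List α) (m : ℕ) : Prop := ∃ a, replicate m a <:+: s

theorem hasRun_iff_getElem? {s : List α} {m : ℕ} :
    HasRun s m ↔ ∃ a k, m + k ≤ s.length ∧ ∀ i < m, s[i + k]? = some a := by
  simp only [HasRun, infix_iff_getElem?, length_replicate, getElem_replicate]

theorem HasRun.append_left {s t : List α} {m : ℕ} (h : HasRun t m) : HasRun (s ++ t) m :=
  h.imp fun _ ha => infix_append_of_infix_right ha

theorem hasRun_replicate_append (c : ℕ) (a : α) (t : List α) :
    HasRun (replicate c a ++ t) c :=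
  ⟨a, infix_append_left⟩

theorem HasRun.le_or_hasRun_of_replicate_append_cons {c m : ℕ} {a x : α} {t : List α}
    (h : HasRun (replicate c a ++ x :: t) m) (hx : x ≠ a) : m ≤ c ∨ HasRun (x :: t) m := by
  obtain ⟨b, hb⟩ := h
  rcases infix_append_iff_ne_nil.mp hb with h | h | ⟨l₁, l₂, hl₁, hl₂, hl, hsuf, hpre⟩
  · exact .inl (by simpa using h.length_le)
  · exact .inr ⟨b, h⟩
  · exfalso
    obtain ⟨y, hy⟩ := exists_mem_of_ne_nil l₁ hl₁
    obtain ⟨t', rfl⟩ : ∃ t', l₂ = x :: t' := by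
      rcases prefix_cons_iff.mp hpre with h | ⟨t', rfl, -⟩
      · exact absurd h hl₂
      · exact ⟨t', rfl⟩
    have hya : y = a := eq_of_mem_replicate (hsuf.subset hy)
    have hyb : y = b := eq_of_mem_replicate (hl ▸ mem_append_left _ hy : y ∈ replicate m b)
    have hxb : x = b :=
      eq_of_mem_replicate (hl ▸ mem_append_right _ mem_cons_self : x ∈ replicate m b)
    exact hx (hxb.trans (hyb.symm.trans hya))

end List

open List

theorem le_maxRunAux_best (t : List Bool) (p : Bool) (c best : ℕ) :
    best ≤ maxRunAux t p c best := by
  induction t generalizing p c best with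
  | nil => exact le_max_right _ _
  | cons x t ih =>
    unfold maxRunAux
    split
    · exact ih ..
    · exact (le_max_right c best).trans (ih ..)

theorem le_maxRunAux_of_hasRun {t : List Bool} {p : Bool} {c best m : ℕ}
    (h : HasRun (replicate c p ++ t) m) : m ≤ maxRunAux t p c best := by
  induction t generalizing p c best with
  | nil =>
    obtain ⟨b, hb⟩ := h
    simpa [maxRunAux] using .inl (by simpa using hb.length_le)
  | cons x t ih =>
    unfold maxRunAux
    split
    · subst x
      exact ih (by rwa [replicate_succ', append_assoc])
    · rcases h.le_or_hasRun_of_replicate_append_cons ‹_› with h | h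
      · exact h.trans ((le_max_left c best).trans (le_maxRunAux_best ..))
      · exact ih (c := 1) h

theorem maxRunAux_eq_or_hasRun (t : List Bool) (p : Bool) (c best : ℕ) :
    maxRunAux t p c best = best ∨ HasRun (replicate c p ++ t) (maxRunAux t p c best) := by
  induction t generalizing p c best with
  | nil =>
    rcases le_total c best with h | h
    · exact .inl (max_eq_right h)
    · exact .inr (by simpa [maxRunAux, max_eq_left h] using hasRun_replicate_append c p [])
  | cons x t ih =>
    unfold maxRunAux
    split
    · subst x
      simpa only [replicate_succ', append_assoc, singleton_append] using ih p (c + 1) best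
    · rcases ih x 1 (max c best) with h | h
      · rw [h]
        rcases le_total c best with hcb | hcb
        · exact .inl (max_eq_right hcb)
        · exact .inr (by simpa [max_eq_left hcb] using hasRun_replicate_append c p (x :: t))
      · exact .inr h.append_left

theorem le_maxRun_of_hasRun {l : List Bool} {m : ℕ} (h : HasRun (l.headD false :: l) m) :
    m ≤ maxRun l := by
  cases l with
  | nil =>
    obtain ⟨b, hb⟩ := h
    simpa [maxRun] using hb.length_le
  | cons b l => exact le_maxRunAux_of_hasRun (c := 2) h

theorem hasRun_maxRun (l : List Bool) : HasRun (l.headD false :: l) (maxRun l) := by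
  cases l with
  | nil => exact hasRun_replicate_append 1 false []
  | cons b l =>
    rcases maxRunAux_eq_or_hasRun l b 2 0 with h | h
    · exact ⟨b, by simp [maxRun, h]⟩
    · exact h

theorem maxRun_pos (l : List Bool) : 0 < maxRun l :=
  le_maxRun_of_hasRun (hasRun_replicate_append 1 _ l)

namespace SimpleGraph

variable {V : Type*} (G : SimpleGraph V)

def VicinalLE (u v : V) : Prop := ∀ ⦃w⦄, w ≠ v → G.Adj u w → G.Adj v w

def AreTwins (u v : V) : Prop := ∀ ⦃w⦄, w ≠ u → w ≠ v → (G.Adj u w ↔ G.Adj v w)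

variable {G}

theorem AreTwins.symm {u v : V} (h : G.AreTwins u v) : G.AreTwins v u :=
  fun _ hv hu => (h hu hv).symm

theorem areTwins_of_vicinalLE_of_degree_le [G.LocallyFinite] {u v : V} (h : G.VicinalLE u v)
    (hdeg : G.degree v ≤ G.degree u) : G.AreTwins u v := by
  classical
  have hsub : (G.neighborFinset u).erase v ⊆ (G.neighborFinset v).erase u := by
    intro w hw
    simp only [Finset.mem_erase, mem_neighborFinset] at hw ⊢
    exact ⟨(G.ne_of_adj hw.2).symm, h hw.1 hw.2⟩
  have hcard : ((G.neighborFinset v).erase u).card ≤ ((G.neighborFinset u).erase v).card := by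
    simp only [Finset.card_erase_eq_ite, mem_neighborFinset, card_neighborFinset_eq_degree,
      G.adj_comm v u]
    split_ifs <;> omega
  have heq := Finset.eq_of_subset_of_card_le hsub hcard
  intro w hwu hwv
  simpa [hwu, hwv] using Finset.ext_iff.mp heq w

theorem Iso.areTwins_apply [G.LocallyFinite] (htot : ∀ u v, G.VicinalLE u v ∨ G.VicinalLE v u)
    (π : G ≃g G) (v : V) : G.AreTwins (π v) v := by
  have hdeg : G.degree (π v) = G.degree v := π.degree_eq v
  rcases htot (π v) v with h | h
  · exact areTwins_of_vicinalLE_of_degree_le h hdeg.ge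
  · exact (areTwins_of_vicinalLE_of_degree_le h hdeg.le).symm

theorem AreTwins.adj_swap [DecidableEq V] {u v : V} (h : G.AreTwins u v) {x y : V}
    (hxy : G.Adj x y) : G.Adj (Equiv.swap u v x) (Equiv.swap u v y) := by
  have hx := G.ne_of_adj hxy
  rw [Equiv.swap_apply_def, Equiv.swap_apply_def]
  split_ifs <;> subst_vars
  all_goals first
    | exact hxy | exact hxy.symm | exact absurd rfl hx
    | exact (h ‹_› ‹_›).mp hxy | exact (h ‹_› ‹_›).mpr hxy
    | exact ((h ‹_› ‹_›).mp hxy.symm).symm | exact ((h ‹_› ‹_›).mpr hxy.symm).symm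

def AreTwins.swapIso [DecidableEq V] {u v : V} (h : G.AreTwins u v) : G ≃g G where
  toEquiv := Equiv.swap u v
  map_rel_iff' {x y} := ⟨fun hxy => by simpa using h.adj_swap hxy, h.adj_swap⟩

@[simp]
theorem AreTwins.swapIso_apply [DecidableEq V] {u v : V} (h : G.AreTwins u v) (w : V) :
    h.swapIso w = Equiv.swap u v w :=
  rfl

end SimpleGraph

open SimpleGraph

theorem IsDistinguishing.apply_ne_of_areTwins {V : Type*} {G : SimpleGraph V} {c : ℕ}
    {φ : V → Fin c} (hφ : IsDistinguishing G φ) {u v : V} (huv : u ≠ v)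
    (h : G.AreTwins u v) :
    φ u ≠ φ v := by
  classical
  intro heq
  have hfix := hφ h.swapIso (fun w => ?_) v
  · exact huv (by simpa using hfix)
  · rw [AreTwins.swapIso_apply, Equiv.swap_apply_def]
    split_ifs <;> simp_all

/-- The type of vertex `k` of `thresholdGraph l`; as `0 - 1 = 0`, the initial vertex gets the type
of vertex `1`. -/
def vertexType (l : List Bool) (k : ℕ) : Bool := l.getD (k - 1) false

section thresholdGraph

variable {l : List Bool}

theorem thresholdGraph_adj {i j : Fin (l.length + 1)} :
    (thresholdGraph l).Adj i j ↔ i ≠ j ∧ vertexType l (max (i : ℕ) (j : ℕ)) = true :=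
  Iff.rfl

theorem getD_headD_cons (l : List Bool) (k : ℕ) :
    (l.headD false :: l).getD k false = vertexType l k := by
  cases k with
  | zero => cases l <;> rfl
  | succ k => simp [vertexType]

theorem hasRun_iff_vertexType {m : ℕ} :
    HasRun (l.headD false :: l) m ↔
      ∃ b a, m + a ≤ l.length + 1 ∧ ∀ i < m, vertexType l (i + a) = b := by
  rw [hasRun_iff_getElem?]
  refine exists_congr fun b => exists_congr fun a => and_congr_right fun hlen =>
    forall₂_congr fun i hi => ?_
  rw [← getD_headD_cons, getD_eq_getElem?_getD,
    getElem?_eq_getElem (by rw [length_cons] at hlen ⊢; omega)]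
  simp

theorem thresholdGraph_vicinalLE_total (u v : Fin (l.length + 1)) :
    (thresholdGraph l).VicinalLE u v ∨ (thresholdGraph l).VicinalLE v u := by
  wlog huv : u ≤ v
  · exact (this v u (le_of_not_ge huv)).symm
  cases hv : vertexType l v
  · refine .inr fun w hwu hvw => ?_
    rw [thresholdGraph_adj] at hvw ⊢
    have hw : v < w := by
      by_contra! hw
      rw [max_eq_left (Fin.val_le_of_le hw), hv] at hvw
      exact absurd hvw.2 Bool.false_ne_true
    rw [max_eq_right (by omega : (u : ℕ) ≤ w)]
    rw [max_eq_right (by omega : (v : ℕ) ≤ w)] at hvw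
    exact ⟨hwu.symm, hvw.2⟩
  · refine .inl fun w hwv huw => ?_
    rw [thresholdGraph_adj] at huw ⊢
    refine ⟨hwv.symm, ?_⟩
    rcases le_total (w : ℕ) v with hw | hw
    · rwa [max_eq_left hw]
    · rw [max_eq_right hw]
      rw [max_eq_right (by omega : (u : ℕ) ≤ w)] at huw
      exact huw.2

theorem thresholdGraph_areTwins_of_vertexType_eq {a m : ℕ} {b : Bool}
    (h : ∀ i < m, vertexType l (i + a) = b) {u v : Fin (l.length + 1)}
    (hu : a ≤ u ∧ (u : ℕ) < m + a) (hv : a ≤ v ∧ (v : ℕ) < m + a) :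
    (thresholdGraph l).AreTwins u v := by
  have h' : ∀ k, a ≤ k → k < m + a → vertexType l k = b := fun k hk hkm => by
    simpa [Nat.sub_add_cancel hk] using h (k - a) (by omega)
  intro w hwu hwv
  simp only [thresholdGraph_adj, Ne.symm hwu, Ne.symm hwv, ne_eq, not_false_eq_true, true_and]
  by_cases hw : max (u : ℕ) v ≤ w
  · rw [max_eq_right (by omega : (u : ℕ) ≤ w), max_eq_right (by omega : (v : ℕ) ≤ w)]
  · rw [h' _ (by omega) (by omega), h' _ (by omega) (by omega)]

theorem vertexType_eq_of_thresholdGraph_areTwins {u v : Fin (l.length + 1)}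
    (h : (thresholdGraph l).AreTwins u v) (k : ℕ) (hu : u ≤ k) (hv : k ≤ v) :
    vertexType l k = vertexType l v := by
  have key : ∀ w : ℕ, w < v → w ≠ u →
      vertexType l (max (u : ℕ) w) = vertexType l v := by
    intro w hwv hwu
    have := h (w := ⟨w, by omega⟩) (Fin.ne_of_val_ne hwu) (Fin.ne_of_val_ne hwv.ne)
    simp only [thresholdGraph_adj, ne_eq, Fin.ext_iff, hwu.symm, hwv.ne', not_false_eq_true,
      true_and, max_eq_left hwv.le] at this
    exact Bool.eq_iff_iff.mpr this
  rcases hv.lt_or_eq with hkv | rfl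
  · rcases hu.lt_or_eq with huk | rfl
    · simpa [max_eq_right huk.le] using key k hkv huk.ne'
    · rcases Nat.eq_zero_or_pos u with hu0 | hu0
      · -- no vertex lies below `u = 0`, but vertex `0` has the type of vertex `1`
        rw [hu0]
        show vertexType l 1 = _
        rcases (show 1 ≤ (v : ℕ) by omega).lt_or_eq with hv1 | hv1
        · simpa [hu0] using key 1 hv1 (by omega)
        · rw [← hv1]
      · simpa using key 0 (by omega) hu0.ne
  · rfl

theorem lt_add_maxRun_of_thresholdGraph_areTwins {u v : Fin (l.length + 1)}
    (h : (thresholdGraph l).AreTwins u v) : (u : ℕ) < v + maxRun l := by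
  rcases le_or_gt (u : ℕ) v with huv | hvu
  · have := maxRun_pos l
    omega
  · have hrun : HasRun (l.headD false :: l) (u + 1 - v) :=
      hasRun_iff_vertexType.mpr ⟨vertexType l u, v, by omega, fun i hi =>
        vertexType_eq_of_thresholdGraph_areTwins h.symm _ (by omega) (by omega)⟩
    have := le_maxRun_of_hasRun hrun
    omega

theorem isDistinguishing_mod_maxRun (l : List Bool) :
    IsDistinguishing (thresholdGraph l)
      fun v => ⟨v % maxRun l, Nat.mod_lt _ (maxRun_pos l)⟩ := by
  classical
  intro π hπ v
  have htwin := π.areTwins_apply thresholdGraph_vicinalLE_total v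
  have hmod : (π v : ℕ) ≡ v [MOD maxRun l] := congrArg Fin.val (hπ v)
  exact Fin.ext <| le_antisymm
    (hmod.le_of_lt_add (lt_add_maxRun_of_thresholdGraph_areTwins htwin))
    (hmod.symm.le_of_lt_add (lt_add_maxRun_of_thresholdGraph_areTwins htwin.symm))

theorem maxRun_le_of_isDistinguishing {c : ℕ} {φ : Fin (l.length + 1) → Fin c}
    (hφ : IsDistinguishing (thresholdGraph l) φ) : maxRun l ≤ c := by
  obtain ⟨b, a, hlen, hrun⟩ := hasRun_iff_vertexType.mp (hasRun_maxRun l)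
  let f : Fin (maxRun l) → Fin (l.length + 1) := fun i => ⟨i + a, by omega⟩
  have hinj : Function.Injective (φ ∘ f) := by
    intro i j hij
    by_contra hne
    refine hφ.apply_ne_of_areTwins (fun h => hne ?_) ?_ hij
    · simpa [f, Fin.ext_iff] using h
    · exact thresholdGraph_areTwins_of_vertexType_eq hrun
        ⟨by simp [f], by simp [f]⟩ ⟨by simp [f], by simp [f]⟩
  simpa using Fintype.card_le_of_injective _ hinj

end thresholdGraph

/-- For a threshold graph, the distinguishing number equals the size of the largest component
of its compact canonical decomposition, i.e. the length of the longest run of consecutive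
additions of the same type (with the first two vertices counted together). -/
theorem distNum_thresholdGraph (l : List Bool) :
    distNum (thresholdGraph l) = maxRun l :=
  IsLeast.csInf_eq ⟨⟨_, isDistinguishing_mod_maxRun l⟩,
    fun _ ⟨_, hφ⟩ => maxRun_le_of_isDistinguishing hφ⟩
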